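/- Let G be a network with request R and extended graph G_ext. Let Ŝ ⊆ S and let f : E_ext → ℕ satisfy the connectivity inequalities f(δ⁺_{E_R}(W)) ≥ 1 for every W ⊆ V_G with W∩Ŝ ≠ ∅. Let (u,v) ∈ E_R with f(u,v) ≥ 1 and let f' agree with f except f'(u,v) = f(u,v) − 1. Suppose W ⊆ V_G with W∩Ŝ ≠ ∅ and f'(δ⁺_{E_R}(W)) = 0. Then: (a) u ∈ W and v ∉ W; (b) f(u,v) = 1, and (u,v) is the unique edge of δ⁺_{E_R}(W) with positive flow in f; and (c) for every s ∈ Ŝ∩W there exists a directed path from s to the super sink o⁻_r in the support graph G^f_ext that traverses the edge (u,v). -/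

import Mathlib

/-! Formalization of the Constrained Virtual Steiner Arborescence Problem (CVSAP),
its single-commodity flow IP formulation, and related notions. -/

/-- Vertices of the extended graph: original vertices plus super source `src`,
super sink `sinkS` for Steiner nodes and super sink `sinkR` for the root. -/
inductive ExtV (V : Type) where
  | orig : V → ExtV V
  | src : ExtV V
  | sinkS : ExtV V
  | sinkR : ExtV V
deriving DecidableEq

open ExtV

/-- A (finite) capacitated directed network. -/
structure Network (V : Type) [DecidableEq V] where
  E : Finset (V × V)
  uE : V × V → ℕ
  cE : V × V → ℝ

/-- A request `R = (root, S, T, u_r, c_S, u_S)`. -/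
structure Request (V : Type) [DecidableEq V] where
  root : V
  S : Finset V
  T : Finset V
  ur : ℕ
  cS : V → ℝ
  uS : V → ℕ

variable {V : Type} [DecidableEq V]

/-- Well-formedness: root is neither terminal nor Steiner site, Steiner sites and terminals
are disjoint, and all costs are positive. -/
def RequestWF (N : Network V) (R : Request V) : Prop :=
  R.root ∉ R.T ∧ R.root ∉ R.S ∧ Disjoint R.S R.T ∧
    (∀ s ∈ R.S, 0 < R.cS s) ∧ (∀ e ∈ N.E, 0 < N.cE e)

/-- Edge set of the extended graph `G_ext`. -/
def Eext (N : Network V) (R : Request V) : Finset (ExtV V × ExtV V) :=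
  (N.E.image fun e => (orig e.1, orig e.2)) ∪
    ({(orig R.root, sinkR)} : Finset (ExtV V × ExtV V)) ∪
    (R.S.image fun s => (orig s, sinkS)) ∪
    (R.S.image fun s => (src, orig s)) ∪
    (R.T.image fun t => (src, orig t))

/-- `E_R`: the extended edges without the edges into the Steiner super sink. -/
def ERext (N : Network V) (R : Request V) : Finset (ExtV V × ExtV V) :=
  (Eext N R).filter fun e => e.2 ≠ sinkS

/-- Edges of `F` leaving node `v`. -/
def outV (F : Finset (ExtV V × ExtV V)) (v : ExtV V) : Finset (ExtV V × ExtV V) :=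
  F.filter fun e => e.1 = v

/-- Edges of `F` entering node `v`. -/
def inV (F : Finset (ExtV V × ExtV V)) (v : ExtV V) : Finset (ExtV V × ExtV V) :=
  F.filter fun e => e.2 = v

/-- Edges of `F` leaving the node set `W`. -/
def outSet (F : Finset (ExtV V × ExtV V)) (W : Finset (ExtV V)) : Finset (ExtV V × ExtV V) :=
  F.filter fun e => e.1 ∈ W ∧ e.2 ∉ W

/-- Total flow of `f` on the edge set `F`. -/
def fSum (f : ExtV V × ExtV V → ℕ) (F : Finset (ExtV V × ExtV V)) : ℕ :=
  ∑ e ∈ F, f e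

/-- Embedding of a set of original nodes into the extended graph. -/
def extW (W : Finset V) : Finset (ExtV V) := W.image orig

/-- A walk in the support graph `G^f_ext`: consecutive nodes are joined by extended
edges carrying positive flow. -/
def IsSupportWalk (N : Network V) (R : Request V) (f : ExtV V × ExtV V → ℕ)
    (p : List (ExtV V)) : Prop :=
  p.Chain' fun a b => (a, b) ∈ Eext N R ∧ 1 ≤ f (a, b)

/-- (IP-1): flow conservation at all original nodes. -/
def IP1 (N : Network V) (R : Request V) (f : ExtV V × ExtV V → ℕ) : Prop :=
  ∀ v : V, fSum f (outV (Eext N R) (orig v)) = fSum f (inV (Eext N R) (orig v))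

/-- (IP-2): connectivity inequalities for activated Steiner sites. -/
def IP2 (N : Network V) (R : Request V) (x : V → ℕ) (f : ExtV V × ExtV V → ℕ) : Prop :=
  ∀ W : Finset V, ∀ s ∈ W, s ∈ R.S → x s ≤ fSum f (outSet (ERext N R) (extW W))

/-- (IP-3): directed Steiner cuts for terminals. -/
def IP3 (N : Network V) (R : Request V) (f : ExtV V × ExtV V → ℕ) : Prop :=
  ∀ W : Finset V, (W ∩ R.T).Nonempty → 1 ≤ fSum f (outSet (ERext N R) (extW W))

/-- Feasibility for the integer program IP-A-CVSAP. -/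
def IPFeasible (N : Network V) (R : Request V) (x : V → ℕ) (f : ExtV V × ExtV V → ℕ) : Prop :=
  (∀ s ∈ R.S, x s ≤ 1) ∧
  IP1 N R f ∧
  IP2 N R x f ∧
  IP3 N R f ∧
  (∀ s ∈ R.S, x s ≤ f (orig s, sinkS)) ∧
  (∀ s ∈ R.S, f (orig s, sinkS) ≤ R.uS s * x s) ∧
  f (orig R.root, sinkR) ≤ R.ur ∧
  (∀ e ∈ N.E, f (orig e.1, orig e.2) ≤ N.uE e) ∧
  (∀ t ∈ R.T, f (src, orig t) = 1) ∧
  (∀ s ∈ R.S, f (src, orig s) = x s)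

/-- Objective value of IP-A-CVSAP. -/
noncomputable def costIP (N : Network V) (R : Request V) (x : V → ℕ)
    (f : ExtV V × ExtV V → ℕ) : ℝ :=
  ∑ e ∈ N.E, N.cE e * f (orig e.1, orig e.2) + ∑ s ∈ R.S, R.cS s * x s

/-- A Virtual Arborescence: nodes, virtual edges and the mapping of virtual edges
onto paths in the underlying graph. -/
structure VirtArb (V : Type) where
  VT : Finset V
  ET : Finset (V × V)
  pi : V × V → List V

/-- `p` is a simple directed path in `N` from `u` to `v`. -/
def IsPathInG (N : Network V) (p : List V) (u v : V) : Prop :=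
  p.Chain' (fun a b => (a, b) ∈ N.E) ∧ p.head? = some u ∧ p.getLast? = some v ∧ p.Nodup

/-- The virtual edges whose path uses the edge `e` of the underlying graph. -/
def pathUses (TA : VirtArb V) (e : V × V) : Finset (V × V) :=
  TA.ET.filter fun d => e ∈ (TA.pi d).zip (TA.pi d).tail

/-- `|π(E_T)[e]|`: the number of paths of the virtual arborescence using edge `e`. -/
def pathCount (TA : VirtArb V) (e : V × V) : ℕ := (pathUses TA e).card

/-- Total degree of node `v` with respect to the virtual edge set `ET`. -/
def degTotal (ET : Finset (V × V)) (v : V) : ℕ :=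
  (ET.filter fun e => e.1 = v).card + (ET.filter fun e => e.2 = v).card

/-- `(VT, ET, r)` is an arborescence rooted at `r` with all edges oriented towards `r`. -/
def ArborTowards (VT : Finset V) (ET : Finset (V × V)) (r : V) : Prop :=
  (∀ e ∈ ET, e.1 ∈ VT ∧ e.2 ∈ VT ∧ e.1 ≠ e.2) ∧
  (∀ v ∈ VT, v ≠ r → (ET.filter fun e => e.1 = v).card = 1) ∧
  (∀ e ∈ ET, e.1 ≠ r) ∧
  (∀ v ∈ VT, ∃ p : List V, p.Chain' (fun a b => (a, b) ∈ ET) ∧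
      p.head? = some v ∧ p.getLast? = some r)

/-- `(VT, ET, r)` is an arborescence rooted at `r` with all edges oriented away from `r`. -/
def ArborAway (VT : Finset V) (ET : Finset (V × V)) (r : V) : Prop :=
  (∀ e ∈ ET, e.1 ∈ VT ∧ e.2 ∈ VT ∧ e.1 ≠ e.2) ∧
  (∀ v ∈ VT, v ≠ r → (ET.filter fun e => e.2 = v).card = 1) ∧
  (∀ e ∈ ET, e.2 ≠ r) ∧
  (∀ v ∈ VT, ∃ p : List V, p.Chain' (fun a b => (a, b) ∈ ET) ∧
      p.head? = some r ∧ p.getLast? = some v)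

/-- Feasible solutions of A-CVSAP: all arborescence edges oriented towards the root. -/
def FeasibleACVSAP (N : Network V) (R : Request V) (TA : VirtArb V) : Prop :=
  R.root ∈ TA.VT ∧
  ArborTowards TA.VT TA.ET R.root ∧
  (∀ d ∈ TA.ET, IsPathInG N (TA.pi d) d.1 d.2) ∧
  R.T ⊆ TA.VT ∧
  TA.VT ⊆ insert R.root (R.S ∪ R.T) ∧
  (∀ t ∈ R.T, degTotal TA.ET t = 1) ∧
  degTotal TA.ET R.root ≤ R.ur ∧
  (∀ s ∈ R.S, s ∈ TA.VT → degTotal TA.ET s ≤ R.uS s + 1) ∧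
  (∀ e ∈ N.E, pathCount TA e ≤ N.uE e)

/-- Feasible solutions of M-CVSAP: all arborescence edges oriented away from the root. -/
def FeasibleMCVSAP (N : Network V) (R : Request V) (TA : VirtArb V) : Prop :=
  R.root ∈ TA.VT ∧
  ArborAway TA.VT TA.ET R.root ∧
  (∀ d ∈ TA.ET, IsPathInG N (TA.pi d) d.1 d.2) ∧
  R.T ⊆ TA.VT ∧
  TA.VT ⊆ insert R.root (R.S ∪ R.T) ∧
  (∀ t ∈ R.T, degTotal TA.ET t = 1) ∧
  degTotal TA.ET R.root ≤ R.ur ∧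
  (∀ s ∈ R.S, s ∈ TA.VT → degTotal TA.ET s ≤ R.uS s + 1) ∧
  (∀ e ∈ N.E, pathCount TA e ≤ N.uE e)

/-- Cost of a virtual arborescence. -/
noncomputable def costCVSAP (N : Network V) (R : Request V) (TA : VirtArb V) : ℝ :=
  ∑ e ∈ N.E, N.cE e * pathCount TA e + ∑ s ∈ R.S.filter (· ∈ TA.VT), R.cS s

/-!
Decrementing `(u, v)` empties the cut of `W`, while the connectivity inequality keeps it
positive, so `(u, v)` is the only flow-carrying edge leaving `W`, and it carries one unit.
For the walk, apply the connectivity inequalities to two further sets. The nodes of `W` that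
cannot reach the tail of a flow-carrying edge leaving `W` (which can only be `u`) form a set
without a flow-carrying outgoing edge, so it contains no site of `Ŝ`. Dually, if `v` could not reach `o⁻_r`, then `W` together with
everything reachable from `v` would be a set meeting `Ŝ` whose outgoing edges carry no flow:
such an edge could end neither at an original node, nor at `o⁺` (no edge enters it), nor at
`o⁻_S` (excluded from `E_R`).
-/

theorem Finset.mem_and_eq_one_of_sum_update_pred_eq_zero {ι : Type*} [DecidableEq ι]
    {s : Finset ι} {f : ι → ℕ} {i : ι} (hs : 1 ≤ ∑ e ∈ s, f e)
    (h0 : ∑ e ∈ s, Function.update f i (f i - 1) e = 0) :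
    i ∈ s ∧ f i = 1 ∧ ∀ e ∈ s, 1 ≤ f e → e = i := by
  have hzero := Finset.sum_eq_zero_iff.mp h0
  have hvanish : ∀ e ∈ s, e ≠ i → f e = 0 := fun e he hne => by
    simpa [Function.update_of_ne hne] using hzero e he
  have hi : i ∈ s := by
    by_contra hi
    have : ∑ e ∈ s, f e = 0 :=
      Finset.sum_eq_zero fun e he => hvanish e he (ne_of_mem_of_not_mem he hi)
    omega
  have hfi : f i = 1 := by
    have hle : f i - 1 = 0 := by simpa using hzero i hi
    have hsum : ∑ e ∈ s, f e = f i :=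
      Finset.sum_eq_single_of_mem i hi fun e he hne => hvanish e he hne
    omega
  refine ⟨hi, hfi, fun e he hfe => ?_⟩
  by_contra hne
  have := hvanish e he hne
  omega

theorem List.mem_zip_tail_append_cons_cons {α : Type*} (l t : List α) (x y : α) :
    (x, y) ∈ (l ++ x :: y :: t).zip (l ++ x :: y :: t).tail := by
  induction l with
  | nil => simp
  | cons a l ih =>
    cases l with
    | nil => simp
    | cons b l => exact List.mem_cons_of_mem _ ih

theorem List.exists_isChain_through_of_reflTransGen {α : Type*} {r : α → α → Prop}
    {a b x y : α} (hax : Relation.ReflTransGen r a x) (hxy : r x y)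
    (hyb : Relation.ReflTransGen r y b) :
    ∃ p : List α, p.IsChain r ∧ p.head? = some a ∧ p.getLast? = some b ∧
      (x, y) ∈ p.zip p.tail := by
  obtain ⟨l₁, hc₁, hl₁⟩ := List.exists_isChain_cons_of_relationReflTransGen hax
  obtain ⟨l₂, hc₂, hl₂⟩ := List.exists_isChain_cons_of_relationReflTransGen hyb
  obtain ⟨init, hinit⟩ : ∃ init, a :: l₁ = init ++ [x] :=
    ⟨_, hl₁ ▸ (List.dropLast_append_getLast _).symm⟩
  have hp : init ++ x :: y :: l₂ = a :: (l₁ ++ y :: l₂) := by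
    rw [← List.cons_append, hinit, List.append_assoc, List.singleton_append]
  refine ⟨init ++ x :: y :: l₂, ?_, by rw [hp]; rfl, ?_,
    List.mem_zip_tail_append_cons_cons init l₂ x y⟩
  · exact List.isChain_append_cons_cons.mpr ⟨hinit ▸ hc₁, hxy, hc₂⟩
  · rw [List.getLast?_append_of_ne_nil _ (List.cons_ne_nil _ _), List.getLast?_cons_cons,
      List.getLast?_eq_some_getLast (List.cons_ne_nil _ _), hl₂]

variable {N : Network V} {R : Request V} {f : ExtV V × ExtV V → ℕ}

@[simp]
theorem orig_mem_extW {x : V} {W : Finset V} : orig x ∈ extW W ↔ x ∈ W := by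
  simp [extW]

theorem snd_eq_sinkR_or_orig_of_mem_ERext {e : ExtV V × ExtV V} (he : e ∈ ERext N R) :
    e.2 = sinkR ∨ ∃ y, e.2 = orig y := by
  obtain ⟨hE, hS⟩ := Finset.mem_filter.mp he
  simp only [Eext, Finset.mem_union, Finset.mem_image, Finset.mem_singleton] at hE
  rcases hE with ((((⟨a, _, rfl⟩ | rfl) | ⟨a, _, rfl⟩) | ⟨a, _, rfl⟩) | ⟨a, _, rfl⟩) <;>
    simp_all

theorem exists_pos_of_one_le_fSum_outSet {F : Finset (ExtV V × ExtV V)} {A : Finset V}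
    (h : 1 ≤ fSum f (outSet F (extW A))) :
    ∃ a ∈ A, ∃ b ∉ extW A, (orig a, b) ∈ F ∧ 1 ≤ f (orig a, b) := by
  obtain ⟨⟨a', b⟩, he, hfe⟩ := Finset.exists_ne_zero_of_sum_ne_zero
    (show ∑ e ∈ outSet F (extW A), f e ≠ 0 by unfold fSum at h; omega)
  obtain ⟨hF, ha', hb⟩ := Finset.mem_filter.mp he
  obtain ⟨a, ha, rfl⟩ := Finset.mem_image.mp ha'
  exact ⟨a, ha, b, hb, hF, Nat.one_le_iff_ne_zero.mpr hfe⟩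

def SupportAdj (N : Network V) (R : Request V) (f : ExtV V × ExtV V → ℕ) (a b : ExtV V) :
    Prop :=
  (a, b) ∈ Eext N R ∧ 1 ≤ f (a, b)

theorem exists_reflTransGen_fst_of_mem_outSet {Shat : Finset V}
    (hconn : ∀ W : Finset V, (W ∩ Shat).Nonempty → 1 ≤ fSum f (outSet (ERext N R) (extW W)))
    {W : Finset V} {s : V} (hs : s ∈ Shat ∩ W) :
    ∃ e ∈ outSet (ERext N R) (extW W), 1 ≤ f e ∧
      Relation.ReflTransGen (SupportAdj N R f) (orig s) e.1 := by
  classical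
  by_contra hnone
  let A := W.filter fun x => ¬ ∃ e ∈ outSet (ERext N R) (extW W), 1 ≤ f e ∧
    Relation.ReflTransGen (SupportAdj N R f) (orig x) e.1
  have hsA : s ∈ A := Finset.mem_filter.mpr ⟨(Finset.mem_inter.mp hs).2, hnone⟩
  obtain ⟨a, haA, b, hbA, hab, hfab⟩ := exists_pos_of_one_le_fSum_outSet
    (hconn A ⟨s, Finset.mem_inter.mpr ⟨hsA, (Finset.mem_inter.mp hs).1⟩⟩)
  obtain ⟨haW, ha⟩ := Finset.mem_filter.mp haA
  by_cases hb'W : b ∈ extW W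
  · obtain ⟨b, hbW, rfl⟩ := Finset.mem_image.mp hb'W
    obtain ⟨e, he, hfe, hbe⟩ :=
      of_not_not fun hb => hbA (orig_mem_extW.mpr (Finset.mem_filter.mpr ⟨hbW, hb⟩))
    exact ha ⟨e, he, hfe, hbe.head ⟨(Finset.mem_filter.mp hab).1, hfab⟩⟩
  · exact ha ⟨(orig a, b), Finset.mem_filter.mpr ⟨hab, orig_mem_extW.mpr haW, hb'W⟩, hfab, .refl⟩

theorem reflTransGen_sinkR_of_forall_outSet [Fintype V] {Shat : Finset V}
    (hconn : ∀ W : Finset V, (W ∩ Shat).Nonempty → 1 ≤ fSum f (outSet (ERext N R) (extW W)))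
    {W : Finset V} (hW : (W ∩ Shat).Nonempty)
    {x : ExtV V} (hx : ∀ e ∈ outSet (ERext N R) (extW W), 1 ≤ f e →
      Relation.ReflTransGen (SupportAdj N R f) x e.2) :
    Relation.ReflTransGen (SupportAdj N R f) x sinkR := by
  classical
  by_contra hsink
  let D := Finset.univ.filter fun y => Relation.ReflTransGen (SupportAdj N R f) x (orig y)
  obtain ⟨s, hs⟩ := hW
  obtain ⟨a, ha, b, hb, hab, hfab⟩ := exists_pos_of_one_le_fSum_outSet (hconn (W ∪ D)
    ⟨s, Finset.mem_inter.mpr ⟨Finset.mem_union_left _ (Finset.mem_inter.mp hs).1,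
      (Finset.mem_inter.mp hs).2⟩⟩)
  have hxb : Relation.ReflTransGen (SupportAdj N R f) x b := by
    rcases Finset.mem_union.mp ha with haW | haD
    · refine hx _ (Finset.mem_filter.mpr ⟨hab, orig_mem_extW.mpr haW, fun hbW => hb ?_⟩) hfab
      exact Finset.image_subset_image Finset.subset_union_left hbW
    · exact (Finset.mem_filter.mp haD).2.tail ⟨(Finset.mem_filter.mp hab).1, hfab⟩
  rcases snd_eq_sinkR_or_orig_of_mem_ERext hab with rfl | ⟨y, rfl⟩
  · exact hsink hxb
  · exact hb (orig_mem_extW.mpr (Finset.mem_union_right _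
      (Finset.mem_filter.mpr ⟨Finset.mem_univ _, hxb⟩)))

theorem violated_cut_properties_general [Fintype V] (N : Network V) (R : Request V)
    (Shat : Finset V)
    (f : ExtV V × ExtV V → ℕ)
    (hconn : ∀ W : Finset V, (W ∩ Shat).Nonempty →
      1 ≤ fSum f (outSet (ERext N R) (extW W)))
    (u v : ExtV V)
    (W : Finset V) (hW : (W ∩ Shat).Nonempty)
    (hW0 : fSum (Function.update f (u, v) (f (u, v) - 1))
        (outSet (ERext N R) (extW W)) = 0) :
    (u ∈ extW W ∧ v ∉ extW W) ∧
    (f (u, v) = 1 ∧ ∀ e ∈ outSet (ERext N R) (extW W), 1 ≤ f e → e = (u, v)) ∧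
    (∀ s ∈ Shat ∩ W, ∃ p : List (ExtV V),
        IsSupportWalk N R f p ∧ p.head? = some (ExtV.orig s) ∧
        p.getLast? = some ExtV.sinkR ∧ (u, v) ∈ p.zip p.tail) := by
  obtain ⟨huv, hfuv, hunique⟩ :=
    Finset.mem_and_eq_one_of_sum_update_pred_eq_zero (hconn W hW) hW0
  obtain ⟨huvE, hu, hv⟩ := Finset.mem_filter.mp huv
  refine ⟨⟨hu, hv⟩, ⟨hfuv, hunique⟩, fun s hs => ?_⟩
  obtain ⟨e, he, hfe, hse⟩ := exists_reflTransGen_fst_of_mem_outSet hconn hs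
  obtain rfl := hunique e he hfe
  have hv_sinkR : Relation.ReflTransGen (SupportAdj N R f) v sinkR :=
    reflTransGen_sinkR_of_forall_outSet hconn hW fun e he hfe => by
      rw [hunique e he hfe]
  exact List.exists_isChain_through_of_reflTransGen hse
    ⟨(Finset.mem_filter.mp huvE).1, hfuv.ge⟩ hv_sinkR

theorem violated_cut_properties [Fintype V] (N : Network V) (R : Request V)
    (hWF : RequestWF N R) (Shat : Finset V) (hShat : Shat ⊆ R.S)
    (f : ExtV V × ExtV V → ℕ)
    (hconn : ∀ W : Finset V, (W ∩ Shat).Nonempty →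
      1 ≤ fSum f (outSet (ERext N R) (extW W)))
    (u v : ExtV V) (huv : (u, v) ∈ ERext N R) (hfuv : 1 ≤ f (u, v))
    (W : Finset V) (hW : (W ∩ Shat).Nonempty)
    (hW0 : fSum (Function.update f (u, v) (f (u, v) - 1))
        (outSet (ERext N R) (extW W)) = 0) :
    (u ∈ extW W ∧ v ∉ extW W) ∧
    (f (u, v) = 1 ∧ ∀ e ∈ outSet (ERext N R) (extW W), 1 ≤ f e → e = (u, v)) ∧
    (∀ s ∈ Shat ∩ W, ∃ p : List (ExtV V),
        IsSupportWalk N R f p ∧ p.head? = some (ExtV.orig s) ∧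
        p.getLast? = some ExtV.sinkR ∧ (u, v) ∈ p.zip p.tail) :=
  violated_cut_properties_general N R Shat f hconn u v W hW hW0
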